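/- arXiv:2209.11379 — 2 statements merged into one kernel-verified Lean document; each statement's English description precedes it below -/
import Mathlib

section
/- Let g_1, ..., g_K ∈ ℝ^p be task gradients. Then 0 is in the convex hull of {g_1, ..., g_K} if and only if min_{w ∈ Δ_K} ‖∑_i w_i g_i‖ = 0, where Δ_K is the probability simplex. Moreover if 0 is not in the convex hull, the minimizer d* = ∑_i w*_i g_i of ‖∑_i w_i g_i‖ over the simplex satisfies ⟨d*, g_i⟩ ≥ ‖d*‖² for all i. -/
/-! The convex hull of the `gᵢ` is the image of the simplex under `w ↦ ∑ wᵢ • gᵢ`, so the first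
claim is a restatement and `d*` is the point of the hull nearest to `0`. The variational
inequality of this projection, `⟪0 - d*, x - d*⟫ ≤ 0` on the hull, gives the second claim at
`x = gᵢ`. -/

open Set

theorem convexHull_range_eq_image_stdSimplex {R E ι : Type*} [Field R] [LinearOrder R]
    [IsStrictOrderedRing R] [AddCommGroup E] [Module R E] [Fintype ι] (g : ι → E) :
    convexHull R (range g) = (fun w : ι → R ↦ ∑ i, w i • g i) '' stdSimplex R ι := by
  classical
  let L : (ι → R) →ₗ[R] E := Fintype.linearCombination R g
  have hL : (fun w : ι → R ↦ ∑ i, w i • g i) = L := by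
    ext w; simp [L, Fintype.linearCombination_apply]
  rw [hL, ← convexHull_basis_eq_stdSimplex, LinearMap.image_convexHull, ← range_comp]
  congr 1
  ext i
  simp [L, Fintype.linearCombination_apply]

theorem norm_sq_le_inner_of_isMinOn_norm {F : Type*} [NormedAddCommGroup F]
    [InnerProductSpace ℝ F] {K : Set F} (hK : Convex ℝ K) {d : F} (hd : d ∈ K)
    (hmin : IsMinOn (‖·‖) K d) {x : F} (hx : x ∈ K) : ‖d‖ ^ 2 ≤ inner ℝ d x := by
  have hproj : ‖0 - d‖ = ⨅ w : K, ‖0 - (w : F)‖ := by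
    have : Nonempty K := ⟨⟨d, hd⟩⟩
    have hbdd : BddBelow (range fun w : K ↦ ‖0 - (w : F)‖) :=
      ⟨0, by rintro _ ⟨w, rfl⟩; exact norm_nonneg _⟩
    exact le_antisymm (le_ciInf fun w ↦ by simpa using hmin w.2) (ciInf_le hbdd ⟨d, hd⟩)
  have h := (norm_eq_iInf_iff_real_inner_le_zero hK hd).1 hproj x hx
  rw [zero_sub, inner_neg_left, inner_sub_right, real_inner_self_eq_norm_sq] at h
  linarith

/-- MGDA key property: 0 lies in the convex hull of the task gradients iff the minimum norm
of simplex combinations is 0; and if 0 is not in the hull, the minimum-norm element d* is a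
common descent direction: ⟨d*, gᵢ⟩ ≥ ‖d*‖² for all i. -/
theorem mgda_min_norm_property {p K : ℕ}
    (g : Fin K → EuclideanSpace ℝ (Fin p)) :
    ((0 : EuclideanSpace ℝ (Fin p)) ∈ convexHull ℝ (Set.range g) ↔
      ∃ w ∈ stdSimplex ℝ (Fin K), ‖∑ i, w i • g i‖ = 0) ∧
    (∀ wstar ∈ stdSimplex ℝ (Fin K),
      (∀ w ∈ stdSimplex ℝ (Fin K), ‖∑ i, wstar i • g i‖ ≤ ‖∑ i, w i • g i‖) →
      (0 : EuclideanSpace ℝ (Fin p)) ∉ convexHull ℝ (Set.range g) →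
      ∀ i, ‖∑ j, wstar j • g j‖ ^ 2 ≤ (inner ℝ (∑ j, wstar j • g j) (g i) : ℝ)) := by
  have hull := convexHull_range_eq_image_stdSimplex (R := ℝ) g
  refine ⟨by simp only [hull, mem_image, norm_eq_zero], fun wstar hwstar hmin _ i ↦ ?_⟩
  have hd : ∑ j, wstar j • g j ∈ convexHull ℝ (range g) := hull ▸ ⟨wstar, hwstar, rfl⟩
  have hminOn : IsMinOn (‖·‖) (convexHull ℝ (range g)) (∑ j, wstar j • g j) := by
    rw [hull]
    rintro _ ⟨w, hw, rfl⟩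
    exact hmin w hw
  exact norm_sq_le_inner_of_isMinOn_norm (convex_convexHull ℝ _) hd hminOn
    (subset_convexHull ℝ _ (mem_range_self i))
end

section
/- Let A ⊆ ℝ^K be convex and let y# ∈ A be such that no y ∈ A satisfies y_i ≤ y#_i for all i with strict inequality in some coordinate (y# is Pareto minimal in A). Then there exists w ∈ ℝ^K, w ≥ 0, w ≠ 0, such that ⟨w, y#⟩ ≤ ⟨w, y⟩ for all y ∈ A. -/
/-- Abstract geometric core of the scalarization converse: a Pareto minimal point of a convex
set in ℝᴷ is supported by a nonnegative, nonzero linear functional. -/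
theorem pareto_minimal_supporting_functional {K : ℕ} (hK : 0 < K)
    (A : Set (Fin K → ℝ)) (hA : Convex ℝ A)
    (ysharp : Fin K → ℝ) (hy : ysharp ∈ A)
    (hpareto : ¬ ∃ y ∈ A, (∀ i, y i ≤ ysharp i) ∧ ∃ j, y j < ysharp j) :
    ∃ w : Fin K → ℝ, (∀ i, 0 ≤ w i) ∧ w ≠ 0 ∧
      ∀ y ∈ A, ∑ i, w i * ysharp i ≤ ∑ i, w i * y i := by
  classical
  set B : Set (Fin K → ℝ) := ⋂ i, {y : Fin K → ℝ | y i < ysharp i} with hB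
  have hBconv : Convex ℝ B := convex_iInter fun i =>
    convex_halfSpace_lt (IsLinearMap.mk (fun x y => rfl) (fun c x => rfl)) (ysharp i)
  have hBopen : IsOpen B := isOpen_iInter_of_finite fun i =>
    isOpen_lt (continuous_apply i) continuous_const
  have hBmem : ∀ y : Fin K → ℝ, y ∈ B ↔ ∀ i, y i < ysharp i := by
    intro y; simp [hB]
  have hdisj : Disjoint B A := by
    rw [Set.disjoint_left]
    intro y hyB hyA
    exact hpareto ⟨y, hyA, fun i => ((hBmem y).1 hyB i).le,
      ⟨⟨0, hK⟩, (hBmem y).1 hyB ⟨0, hK⟩⟩⟩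
  obtain ⟨f, u, hfB, hfA⟩ := geometric_hahn_banach_open hBconv hBopen hA hdisj
  set w : Fin K → ℝ := fun i => f (Pi.single i 1) with hw
  have hsingle : ∀ (i : Fin K) (c : ℝ), Pi.single i c = c • (Pi.single i 1 : Fin K → ℝ) := by
    intro i c; ext j; simp [Pi.single_apply, mul_ite]
  have hfval : ∀ y : Fin K → ℝ, f y = ∑ i, w i * y i := by
    intro y
    conv_lhs => rw [← Finset.univ_sum_single y]
    rw [map_sum]
    refine Finset.sum_congr rfl fun i _ => ?_
    rw [hsingle i (y i), map_smul]
    simp [hw, mul_comm]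
  -- auxiliary points in B
  have hmemB : ∀ t : ℝ, -1 < t → ∀ i : Fin K,
      (ysharp - (fun _ => (1:ℝ)) - t • (Pi.single i 1 : Fin K → ℝ)) ∈ B := by
    intro t ht i
    rw [hBmem]
    intro j
    by_cases hji : j = i
    · subst hji
      simp [Pi.single_apply]
      linarith
    · simp [Pi.single_apply, hji]
  have hone : ∀ t : ℝ, ∀ i : Fin K,
      f (ysharp - (fun _ => (1:ℝ)) - t • (Pi.single i 1 : Fin K → ℝ))
        = f ysharp - f (fun _ => (1:ℝ)) - t * w i := by
    intro t i
    rw [map_sub, map_sub, map_smul]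
    simp [hw]
  -- nonnegativity
  have hwpos : ∀ i, 0 ≤ w i := by
    intro i
    by_contra h
    push_neg at h
    set t : ℝ := max 0 ((u + 1 - f ysharp + f (fun _ => (1:ℝ))) / (-w i)) with ht
    have ht0 : (0:ℝ) ≤ t := le_max_left _ _
    have hlt := hfB _ (hmemB t (by linarith) i)
    rw [hone] at hlt
    have hdiv : (u + 1 - f ysharp + f (fun _ => (1:ℝ))) / (-w i) ≤ t := le_max_right _ _
    have hwneg : (0:ℝ) < -w i := by linarith
    have : u + 1 - f ysharp + f (fun _ => (1:ℝ)) ≤ t * (-w i) := by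
      rw [div_le_iff₀ hwneg] at hdiv; linarith
    nlinarith
  -- f of the all-ones vector is positive
  have hfy : u ≤ f ysharp := hfA _ hy
  have hb0 := hfB _ (hmemB 0 (by norm_num) ⟨0, hK⟩)
  rw [hone] at hb0
  have honepos : 0 < f (fun _ => (1:ℝ)) := by linarith
  -- f ysharp ≤ u
  have hyu : f ysharp ≤ u := by
    by_contra h
    push_neg at h
    obtain ⟨ε, hε0, hkey⟩ : ∃ ε : ℝ, 0 < ε ∧
        ε * f (fun _ => (1:ℝ)) = (f ysharp - u) / 2 :=
      ⟨(f ysharp - u) / (2 * f (fun _ => (1:ℝ))),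
        div_pos (by linarith) (by linarith), by field_simp⟩
    have hmem : (ysharp - (fun _ => (1:ℝ)) - (ε - 1) • (Pi.single (⟨0, hK⟩ : Fin K) 1 : Fin K → ℝ)
        + ((1:ℝ) - ε) • (((fun _ => (1:ℝ)) : Fin K → ℝ) - Pi.single (⟨0, hK⟩ : Fin K) 1)) ∈ B := by
      rw [hBmem]
      intro j
      by_cases hj : j = ⟨0, hK⟩
      · subst hj; simp [Pi.single_apply]; linarith
      · simp [Pi.single_apply, hj]; linarith
    have hlt := hfB _ hmem
    rw [map_add, hone, map_smul, map_sub] at hlt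
    have : f (Pi.single (⟨0, hK⟩ : Fin K) (1:ℝ)) = w ⟨0, hK⟩ := rfl
    rw [this, smul_eq_mul] at hlt
    ring_nf at hlt
    nlinarith [hlt, hkey]
  refine ⟨w, hwpos, ?_, ?_⟩
  · intro hw0
    have : f (fun _ => (1:ℝ)) = 0 := by
      rw [hfval]; simp [hw0]
    linarith
  · intro y hyA
    have h1 := hfA y hyA
    rw [hfval] at h1 hyu
    linarith
end
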